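/- Janson's inequality: let z₁, …, z_m be independent random variables taking values in {0,1}, let 𝒮 be a finite family of nonempty subsets of {1,…,m}, for each α ∈ 𝒮 set I_α = ∏_{j ∈ α} z_j, and let Y = ∑_{α ∈ 𝒮} I_α. Write α ∼ β if α ∩ β ≠ ∅, and set Δ = ∑_{(α,β) ∈ 𝒮×𝒮, α ∼ β} E(I_α I_β). Then for every ε > 0, P(Y ≤ (1−ε)·E(Y)) ≤ exp(−(ε·E(Y))² / (2(E(Y) + Δ))). -/

import Mathlib

/-!
Write `Ψ(t) = E e^{-tY}`, `μ = E Y`, and split `Y = Y_α + Z_α` according to whether a set of `𝒮`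
meets `α` or not. Conditioned on `I_α = 1` the coordinates are still independent, so the Harris
(FKG) inequality for the decreasing functions `e^{-tY_α}`, `e^{-tZ_α}`, together with the
independence of `I_α` and `Z_α`, gives `E[I_α e^{-tY}] ≥ E[I_α e^{-tY_α}] Ψ(t)`. Bounding
`e^{-tY_α} ≥ 1 - tY_α` and summing over `α` yields `-Ψ'(t) = E[Y e^{-tY}] ≥ (μ - tΔ) Ψ(t)`, hence
`Ψ(t) ≤ exp(-μt + Δt²/2)`, and Chernoff's bound at `t = εμ/(μ+Δ)` finishes the proof.
All expectations are computed on the cube of subsets of the index set, under the law of the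
random set `{j | z_j = 1}`.
-/

open Real MeasureTheory ProbabilityTheory Finset

lemma mul_exp_le_of_hasDerivAt_le_neg_mul {φ φ' G g : ℝ → ℝ} {a b : ℝ} (hab : a ≤ b)
    (hφ : ∀ t, HasDerivAt φ (φ' t) t) (hG : ∀ t, HasDerivAt G (g t) t)
    (h : ∀ t ∈ Set.Ioo a b, φ' t ≤ -(g t * φ t)) :
    φ b * exp (G b) ≤ φ a * exp (G a) := by
  have hH : ∀ t, HasDerivAt (fun t ↦ φ t * exp (G t))
      (φ' t * exp (G t) + φ t * (exp (G t) * g t)) t :=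
    fun t ↦ (hφ t).mul (hG t).exp
  refine antitoneOn_of_deriv_nonpos (convex_Icc a b)
    (fun t _ ↦ (hH t).continuousAt.continuousWithinAt)
    (fun t _ ↦ (hH t).differentiableAt.differentiableWithinAt) (fun t ht ↦ ?_)
    (Set.left_mem_Icc.2 hab) (Set.right_mem_Icc.2 hab) hab
  rw [interior_Icc] at ht
  rw [(hH t).deriv]
  nlinarith [h t ht, exp_pos (G t)]

lemma fkg_of_antitone {α : Type*} [DistribLattice α] [Fintype α] {μ f g : α → ℝ}
    (hμ₀ : 0 ≤ μ) (hf₀ : 0 ≤ f) (hg₀ : 0 ≤ g) (hf : Antitone f) (hg : Antitone g)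
    (hμ : ∀ a b, μ a * μ b ≤ μ (a ⊓ b) * μ (a ⊔ b)) :
    (∑ a, μ a * f a) * ∑ a, μ a * g a ≤ (∑ a, μ a) * ∑ a, μ a * (f a * g a) :=
  fkg (α := αᵒᵈ) (f := f) (g := g) (μ := μ) hμ₀ hf₀ hg₀ hf.dual_left hg.dual_left
    fun a b ↦ (hμ a b).trans_eq (mul_comm _ _)

lemma Finset.sum_univ_eq_sum_powerset_sum_powerset_compl {ι M : Type*} [Fintype ι]
    [DecidableEq ι] [AddCommMonoid M] (u : Finset ι) (F : Finset ι → M) :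
    ∑ S, F S = ∑ A ∈ u.powerset, ∑ B ∈ uᶜ.powerset, F (A ∪ B) := by
  rw [← sum_product']
  refine sum_nbij' (fun S ↦ (S ∩ u, S \ u)) (fun AB ↦ AB.1 ∪ AB.2) ?_ ?_ ?_ ?_ ?_
  · intro S _
    simp [subset_iff]
  · simp
  · exact fun S _ ↦ sup_inf_sdiff S u
  · rintro ⟨A, B⟩ h
    simp only [mem_product, mem_powerset, subset_compl_iff_disjoint_right] at h
    simp [union_inter_distrib_right, union_sdiff_distrib, inter_eq_left.2 h.1,
      disjoint_iff_inter_eq_empty.1 h.2, sdiff_eq_empty_iff_subset.2 h.1, h.2.sdiff_eq_left]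
  · exact fun S _ ↦ congrArg F (sup_inf_sdiff S u).symm

section SubsetIndicator

variable {ι : Type*} [DecidableEq ι]

def subsetIndicator (u S : Finset ι) : ℝ := if u ⊆ S then 1 else 0

lemma subsetIndicator_nonneg (u S : Finset ι) : 0 ≤ subsetIndicator u S := by
  unfold subsetIndicator; split_ifs <;> norm_num

lemma subsetIndicator_mono (u : Finset ι) : Monotone (subsetIndicator u) := by
  intro S T h
  unfold subsetIndicator
  split_ifs with hS hT
  · rfl
  · exact absurd (hS.trans h) hT
  · norm_num
  · rfl

lemma subsetIndicator_inter_self (u S : Finset ι) :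
    subsetIndicator u (S ∩ u) = subsetIndicator u S := by
  simp [subsetIndicator, subset_inter_iff]

lemma subsetIndicator_sdiff {u v : Finset ι} (h : Disjoint u v) (S : Finset ι) :
    subsetIndicator v (S \ u) = subsetIndicator v S := by
  simp [subsetIndicator, subset_sdiff, h.symm]

lemma subsetIndicator_mul_subsetIndicator (u A B : Finset ι) :
    subsetIndicator u A * subsetIndicator u B =
      subsetIndicator u (A ∩ B) * subsetIndicator u (A ∪ B) := by
  by_cases hA : u ⊆ A
  · by_cases hB : u ⊆ B <;>
      simp [subsetIndicator, subset_inter_iff, hA, hB, hA.trans subset_union_left]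
  · simp [subsetIndicator, subset_inter_iff, hA]

def containedCount (𝒮 : Finset (Finset ι)) (S : Finset ι) : ℝ := ∑ α ∈ 𝒮, subsetIndicator α S

lemma containedCount_nonneg (𝒮 : Finset (Finset ι)) (S : Finset ι) : 0 ≤ containedCount 𝒮 S :=
  sum_nonneg fun α _ ↦ subsetIndicator_nonneg α S

lemma antitone_exp_neg_mul_containedCount {t : ℝ} (ht : 0 ≤ t) (𝒮 : Finset (Finset ι)) :
    Antitone fun S ↦ exp (-t * containedCount 𝒮 S) := fun S T h ↦
  exp_le_exp.2 <| by
    simp only [neg_mul, neg_le_neg_iff]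
    exact mul_le_mul_of_nonneg_left (sum_le_sum fun α _ ↦ subsetIndicator_mono α h) ht

lemma containedCount_sdiff {𝒮 : Finset (Finset ι)} {u : Finset ι} (h : ∀ β ∈ 𝒮, Disjoint u β)
    (S : Finset ι) : containedCount 𝒮 (S \ u) = containedCount 𝒮 S :=
  sum_congr rfl fun β hβ ↦ subsetIndicator_sdiff (h β hβ) S

end SubsetIndicator

section Cube

variable {ι : Type*} [DecidableEq ι]

-- `cubeWeight p univ` is the law of the random subset containing each `j` independently with
-- probability `p j`, and `cubeWeight p u` its marginal on the coordinates in `u`.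
def cubeWeight (p : ι → ℝ) (u S : Finset ι) : ℝ := ∏ j ∈ u, if j ∈ S then p j else 1 - p j

variable {p : ι → ℝ}

lemma cubeWeight_nonneg (hp : ∀ j, p j ∈ Set.Icc 0 1) (u S : Finset ι) :
    0 ≤ cubeWeight p u S :=
  prod_nonneg fun j _ ↦ by split_ifs <;> linarith [(hp j).1, (hp j).2]

lemma cubeWeight_congr {u S T : Finset ι} (h : S ∩ u = T ∩ u) :
    cubeWeight p u S = cubeWeight p u T :=
  prod_congr rfl fun j hj ↦ by
    rw [if_congr (by simpa [hj] using congrArg (j ∈ ·) h) rfl rfl]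

lemma cubeWeight_mul_cubeWeight (u A B : Finset ι) :
    cubeWeight p u A * cubeWeight p u B = cubeWeight p u (A ∩ B) * cubeWeight p u (A ∪ B) := by
  simp only [cubeWeight, ← prod_mul_distrib]
  refine prod_congr rfl fun j _ ↦ ?_
  by_cases hA : j ∈ A <;> by_cases hB : j ∈ B <;> simp [hA, hB, mul_comm]

lemma sum_powerset_cubeWeight (p : ι → ℝ) (u : Finset ι) :
    ∑ A ∈ u.powerset, cubeWeight p u A = 1 := by
  have h : ∀ A ∈ u.powerset, cubeWeight p u A = (∏ j ∈ A, p j) * ∏ j ∈ u \ A, (1 - p j) := by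
    intro A hA
    rw [cubeWeight, prod_ite, filter_mem_eq_inter, inter_eq_right.2 (mem_powerset.1 hA),
      filter_notMem_eq_sdiff]
  rw [sum_congr rfl h, ← prod_add]
  simp

variable [Fintype ι]

def cubeMean (p : ι → ℝ) (F : Finset ι → ℝ) : ℝ := ∑ S, cubeWeight p univ S * F S

lemma cubeWeight_univ (u S : Finset ι) :
    cubeWeight p univ S = cubeWeight p u S * cubeWeight p uᶜ S :=
  (prod_mul_prod_compl u _).symm

lemma cubeMean_const (p : ι → ℝ) (c : ℝ) : cubeMean p (fun _ ↦ c) = c := by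
  rw [cubeMean, ← sum_mul, ← powerset_univ, sum_powerset_cubeWeight, one_mul]

lemma cubeMean_mono (hp : ∀ j, p j ∈ Set.Icc 0 1) {F G : Finset ι → ℝ} (h : F ≤ G) :
    cubeMean p F ≤ cubeMean p G :=
  sum_le_sum fun S _ ↦ mul_le_mul_of_nonneg_left (h S) (cubeWeight_nonneg hp _ S)

lemma cubeMean_nonneg (hp : ∀ j, p j ∈ Set.Icc 0 1) {F : Finset ι → ℝ} (hF : 0 ≤ F) :
    0 ≤ cubeMean p F :=
  (cubeMean_const p 0).symm.trans_le (cubeMean_mono hp hF)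

lemma cubeMean_sum {κ : Type*} (p : ι → ℝ) (s : Finset κ) (F : κ → Finset ι → ℝ) :
    cubeMean p (fun S ↦ ∑ k ∈ s, F k S) = ∑ k ∈ s, cubeMean p (F k) := by
  simp only [cubeMean, mul_sum]
  exact sum_comm

lemma cubeMean_sub_mul (p : ι → ℝ) (F G : Finset ι → ℝ) (c : ℝ) :
    cubeMean p (fun S ↦ F S - c * G S) = cubeMean p F - c * cubeMean p G := by
  simp only [cubeMean, mul_sub, sum_sub_distrib, mul_sum]
  congr 1
  exact sum_congr rfl fun S _ ↦ by ring

lemma hasDerivAt_cubeMean_exp (p : ι → ℝ) (Y : Finset ι → ℝ) (t : ℝ) :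
    HasDerivAt (fun t ↦ cubeMean p (fun S ↦ exp (-t * Y S)))
      (-cubeMean p (fun S ↦ Y S * exp (-t * Y S))) t := by
  have h : ∀ S, HasDerivAt (fun t ↦ cubeWeight p univ S * exp (-t * Y S))
      (cubeWeight p univ S * (exp (-t * Y S) * (-1 * Y S))) t :=
    fun S ↦ (((hasDerivAt_neg t).mul_const (Y S)).exp).const_mul _
  refine (HasDerivAt.fun_sum (u := univ) fun S _ ↦ h S).congr_deriv ?_
  simp only [cubeMean, ← sum_neg_distrib]
  exact sum_congr rfl fun S _ ↦ by ring

lemma cubeMean_mul_eq_sum_mul_sum (p : ι → ℝ) (u : Finset ι) {f g : Finset ι → ℝ}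
    (hf : ∀ S, f (S ∩ u) = f S) (hg : ∀ S, g (S \ u) = g S) :
    cubeMean p (fun S ↦ f S * g S) =
      (∑ A ∈ u.powerset, cubeWeight p u A * f A) * ∑ B ∈ uᶜ.powerset, cubeWeight p uᶜ B * g B := by
  rw [cubeMean, sum_univ_eq_sum_powerset_sum_powerset_compl u, sum_mul_sum]
  refine sum_congr rfl fun A hA ↦ sum_congr rfl fun B hB ↦ ?_
  rw [mem_powerset] at hA hB
  have hAB : (A ∪ B) ∩ u = A := by
    ext j; have := @hA j; have := @hB j; simp only [mem_inter, mem_union, mem_compl] at *; tauto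
  have hBA : (A ∪ B) ∩ uᶜ = B := by
    ext j; have := @hA j; have := @hB j; simp only [mem_inter, mem_union, mem_compl] at *; tauto
  rw [cubeWeight_univ u, cubeWeight_congr (hAB.trans (inter_eq_left.2 hA).symm),
    cubeWeight_congr (hBA.trans (inter_eq_left.2 hB).symm), ← hf, ← hg, sdiff_eq_inter_compl,
    hAB, hBA]
  ring

lemma cubeMean_mul_of_inter_sdiff (p : ι → ℝ) (u : Finset ι) {f g : Finset ι → ℝ}
    (hf : ∀ S, f (S ∩ u) = f S) (hg : ∀ S, g (S \ u) = g S) :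
    cubeMean p (fun S ↦ f S * g S) = cubeMean p f * cubeMean p g := by
  have hf' := cubeMean_mul_eq_sum_mul_sum p u hf (g := fun _ ↦ 1) fun _ ↦ rfl
  have hg' := cubeMean_mul_eq_sum_mul_sum p u (f := fun _ ↦ 1) (fun _ ↦ rfl) hg
  simp only [mul_one, one_mul, sum_powerset_cubeWeight] at hf' hg'
  rw [cubeMean_mul_eq_sum_mul_sum p u hf hg, hf', hg']

lemma cubeMean_subsetIndicator_mul_le (hp : ∀ j, p j ∈ Set.Icc 0 1) (u : Finset ι)
    {f g : Finset ι → ℝ} (hf₀ : 0 ≤ f) (hg₀ : 0 ≤ g) (hf : Antitone f) (hg : Antitone g)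
    (hgu : ∀ S, g (S \ u) = g S) :
    cubeMean p (fun S ↦ subsetIndicator u S * f S) * cubeMean p g ≤
      cubeMean p (fun S ↦ subsetIndicator u S * (f S * g S)) := by
  set ν : Finset ι → ℝ := fun S ↦ cubeWeight p univ S * subsetIndicator u S
  have hfkg := fkg_of_antitone (μ := ν) (f := f) (g := g)
    (fun S ↦ mul_nonneg (cubeWeight_nonneg hp _ S) (subsetIndicator_nonneg u S)) hf₀ hg₀ hf hg
    fun A B ↦ le_of_eq <| by
      simp only [ν, inf_eq_inter, sup_eq_union]
      rw [mul_mul_mul_comm, cubeWeight_mul_cubeWeight, subsetIndicator_mul_subsetIndicator]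
      ring
  have hindep : cubeMean p (fun S ↦ subsetIndicator u S * g S) =
      cubeMean p (subsetIndicator u) * cubeMean p g :=
    cubeMean_mul_of_inter_sdiff p u (subsetIndicator_inter_self u) hgu
  have hν : ∀ F : Finset ι → ℝ,
      ∑ S, ν S * F S = cubeMean p (fun S ↦ subsetIndicator u S * F S) :=
    fun F ↦ sum_congr rfl fun S _ ↦ mul_assoc _ _ _
  rw [hν, hν, hν, hindep] at hfkg
  change _ * (_ * _) ≤ cubeMean p (subsetIndicator u) * _ at hfkg
  obtain hzero | hpos := (cubeMean_nonneg hp (subsetIndicator_nonneg u)).eq_or_lt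
  · have hν0 : ∀ S, ν S = 0 := (Fintype.sum_eq_zero_iff_of_nonneg fun S ↦
      mul_nonneg (cubeWeight_nonneg hp _ S) (subsetIndicator_nonneg u S)).1 hzero.symm |> congrFun
    rw [← hν, Fintype.sum_eq_zero _ fun S ↦ by rw [hν0, zero_mul], zero_mul]
    exact cubeMean_nonneg hp fun S ↦
      mul_nonneg (subsetIndicator_nonneg u S) (mul_nonneg (hf₀ S) (hg₀ S))
  · exact le_of_mul_le_mul_left (by linarith) hpos

end Cube

section Janson

variable {ι : Type*} [Fintype ι] [DecidableEq ι] {p : ι → ℝ}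

def jansonDelta (p : ι → ℝ) (𝒮 : Finset (Finset ι)) : ℝ :=
  ∑ α ∈ 𝒮, ∑ β ∈ 𝒮, if (α ∩ β).Nonempty then
    cubeMean p (fun S ↦ subsetIndicator α S * subsetIndicator β S) else 0

lemma jansonDelta_nonneg (hp : ∀ j, p j ∈ Set.Icc 0 1) (𝒮 : Finset (Finset ι)) :
    0 ≤ jansonDelta p 𝒮 :=
  sum_nonneg fun α _ ↦ sum_nonneg fun β _ ↦ by
    split_ifs
    exacts [cubeMean_nonneg hp fun S ↦
      mul_nonneg (subsetIndicator_nonneg α S) (subsetIndicator_nonneg β S), le_rfl]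

lemma cubeMean_subsetIndicator_exp_overlap_mul_le (hp : ∀ j, p j ∈ Set.Icc 0 1)
    (𝒮 : Finset (Finset ι)) (α : Finset ι) {t : ℝ} (ht : 0 ≤ t) :
    cubeMean p (fun S ↦ subsetIndicator α S *
        exp (-t * containedCount {β ∈ 𝒮 | (α ∩ β).Nonempty} S)) *
      cubeMean p (fun S ↦ exp (-t * containedCount 𝒮 S)) ≤
    cubeMean p (fun S ↦ subsetIndicator α S * exp (-t * containedCount 𝒮 S)) := by
  set Y := containedCount {β ∈ 𝒮 | (α ∩ β).Nonempty}
  set Z := containedCount {β ∈ 𝒮 | ¬(α ∩ β).Nonempty}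
  have hYZ : ∀ S, containedCount 𝒮 S = Y S + Z S := fun S ↦
    (sum_filter_add_sum_filter_not 𝒮 (fun β ↦ (α ∩ β).Nonempty) _).symm
  have hZ : ∀ S, Z (S \ α) = Z S := containedCount_sdiff fun β hβ ↦ by
    simpa [disjoint_iff_inter_eq_empty, not_nonempty_iff_eq_empty] using (mem_filter.1 hβ).2
  calc _ ≤ cubeMean p (fun S ↦ subsetIndicator α S * exp (-t * Y S)) *
        cubeMean p (fun S ↦ exp (-t * Z S)) := by
        refine mul_le_mul_of_nonneg_left (cubeMean_mono hp fun S ↦ exp_le_exp.2 ?_)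
          (cubeMean_nonneg hp fun S ↦ mul_nonneg (subsetIndicator_nonneg α S) (exp_nonneg _))
        rw [hYZ]
        nlinarith [containedCount_nonneg {β ∈ 𝒮 | (α ∩ β).Nonempty} S]
    _ ≤ cubeMean p (fun S ↦ subsetIndicator α S * (exp (-t * Y S) * exp (-t * Z S))) :=
        cubeMean_subsetIndicator_mul_le hp α (fun S ↦ exp_nonneg _) (fun S ↦ exp_nonneg _)
          (antitone_exp_neg_mul_containedCount ht _) (antitone_exp_neg_mul_containedCount ht _)
          fun S ↦ by rw [hZ]
    _ = _ := by simp only [hYZ, ← exp_add, mul_add]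

lemma cubeMean_sub_mul_le_cubeMean_mul_exp (hp : ∀ j, p j ∈ Set.Icc 0 1) (α : Finset ι)
    (Y : Finset ι → ℝ) (t : ℝ) :
    cubeMean p (subsetIndicator α) - t * cubeMean p (fun S ↦ subsetIndicator α S * Y S) ≤
      cubeMean p (fun S ↦ subsetIndicator α S * exp (-t * Y S)) := by
  rw [← cubeMean_sub_mul]
  refine cubeMean_mono hp fun S ↦ ?_
  have := mul_le_mul_of_nonneg_left (add_one_le_exp (-t * Y S)) (subsetIndicator_nonneg α S)
  linarith

lemma sub_mul_cubeMean_exp_le (hp : ∀ j, p j ∈ Set.Icc 0 1) (𝒮 : Finset (Finset ι)) {t : ℝ}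
    (ht : 0 ≤ t) :
    (cubeMean p (containedCount 𝒮) - t * jansonDelta p 𝒮) *
        cubeMean p (fun S ↦ exp (-t * containedCount 𝒮 S)) ≤
      cubeMean p (fun S ↦ containedCount 𝒮 S * exp (-t * containedCount 𝒮 S)) := by
  have hμ : cubeMean p (containedCount 𝒮) = ∑ α ∈ 𝒮, cubeMean p (subsetIndicator α) :=
    cubeMean_sum p 𝒮 _
  have hΔ : jansonDelta p 𝒮 = ∑ α ∈ 𝒮, cubeMean p (fun S ↦
      subsetIndicator α S * containedCount {β ∈ 𝒮 | (α ∩ β).Nonempty} S) := by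
    refine sum_congr rfl fun α _ ↦ ?_
    simp only [containedCount, mul_sum, cubeMean_sum]
    rw [sum_filter]
  have hY : cubeMean p (fun S ↦ containedCount 𝒮 S * exp (-t * containedCount 𝒮 S)) =
      ∑ α ∈ 𝒮, cubeMean p (fun S ↦ subsetIndicator α S * exp (-t * containedCount 𝒮 S)) := by
    rw [← cubeMean_sum]
    simp only [containedCount, sum_mul]
  rw [hμ, hΔ, hY, mul_sum, ← sum_sub_distrib, sum_mul]
  refine sum_le_sum fun α _ ↦ ?_
  exact (mul_le_mul_of_nonneg_right (cubeMean_sub_mul_le_cubeMean_mul_exp hp α _ t)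
    (cubeMean_nonneg hp fun S ↦ exp_nonneg _)).trans
    (cubeMean_subsetIndicator_exp_overlap_mul_le hp 𝒮 α ht)

theorem cubeMean_exp_neg_mul_containedCount_le (hp : ∀ j, p j ∈ Set.Icc 0 1)
    (𝒮 : Finset (Finset ι)) {t : ℝ} (ht : 0 ≤ t) :
    cubeMean p (fun S ↦ exp (-t * containedCount 𝒮 S)) ≤
      exp (-(cubeMean p (containedCount 𝒮) * t) + jansonDelta p 𝒮 * t ^ 2 / 2) := by
  set μ := cubeMean p (containedCount 𝒮)
  set Δ := jansonDelta p 𝒮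
  have hG : ∀ s, HasDerivAt (fun s ↦ μ * s - Δ * s ^ 2 / 2) (μ - Δ * s) s := fun s ↦ by
    refine (((hasDerivAt_id' s).const_mul μ).sub
      (((hasDerivAt_pow 2 s).const_mul Δ).div_const 2)).congr_deriv ?_
    simp only [mul_one, Nat.cast_ofNat, pow_one, Nat.add_one_sub_one]
    ring
  have h := mul_exp_le_of_hasDerivAt_le_neg_mul ht (hasDerivAt_cubeMean_exp p _) hG
    fun s hs ↦ by linarith [sub_mul_cubeMean_exp_le hp 𝒮 hs.1.le]
  have h0 : cubeMean p (fun S ↦ exp (-0 * containedCount 𝒮 S)) *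
      exp (μ * 0 - Δ * 0 ^ 2 / 2) = 1 := by
    simp [cubeMean_const]
  rw [h0, ← le_div_iff₀ (exp_pos _), one_div, ← exp_neg] at h
  exact h.trans_eq (congrArg exp (by ring))

end Janson

section OnesSet

variable {Ω ι : Type*} [Fintype ι] {z : ι → Ω → ℝ}

noncomputable def onesSet (z : ι → Ω → ℝ) (ω : Ω) : Finset ι := {j | z j ω = 1}

lemma comp_onesSet_eq_sum (F : Finset ι → ℝ) :
    (fun ω ↦ F (onesSet z ω)) = fun ω ↦ ∑ S, (onesSet z ⁻¹' {S}).indicator (fun _ ↦ F S) ω := by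
  ext ω
  rw [Fintype.sum_eq_single (f := fun S ↦ (onesSet z ⁻¹' {S}).indicator (fun _ ↦ F S) ω)
    (onesSet z ω) fun S hS ↦ Set.indicator_of_notMem (Ne.symm hS) _]
  exact (Set.indicator_of_mem rfl _).symm

variable [DecidableEq ι]

lemma prod_eq_subsetIndicator_onesSet (hval : ∀ j ω, z j ω = 0 ∨ z j ω = 1) (α : Finset ι)
    (ω : Ω) : ∏ j ∈ α, z j ω = subsetIndicator α (onesSet z ω) := by
  unfold subsetIndicator
  split_ifs with h
  · exact prod_eq_one fun j hj ↦ by simpa [onesSet] using h hj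
  · obtain ⟨j, hj, hjω⟩ := not_subset.1 h
    exact prod_eq_zero hj <| (hval j ω).resolve_right <| by simpa [onesSet] using hjω

lemma onesSet_preimage_singleton (hval : ∀ j ω, z j ω = 0 ∨ z j ω = 1) (S : Finset ι) :
    onesSet z ⁻¹' {S} = ⋂ j, z j ⁻¹' {if j ∈ S then 1 else 0} := by
  ext ω
  simp only [Set.mem_preimage, Set.mem_singleton_iff, Set.mem_iInter, Finset.ext_iff, onesSet,
    mem_filter, mem_univ, true_and]
  refine forall_congr' fun j ↦ ?_
  rcases hval j ω with h | h <;> split_ifs <;> simp_all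

variable [MeasurableSpace Ω]

lemma measurableSet_onesSet_preimage (hmeas : ∀ j, Measurable (z j))
    (hval : ∀ j ω, z j ω = 0 ∨ z j ω = 1) (S : Finset ι) :
    MeasurableSet (onesSet z ⁻¹' {S}) := by
  rw [onesSet_preimage_singleton hval]
  exact MeasurableSet.iInter fun j ↦ hmeas j (measurableSet_singleton _)

lemma measureReal_onesSet_preimage (μ : Measure Ω) [IsProbabilityMeasure μ]
    (hmeas : ∀ j, Measurable (z j)) (hval : ∀ j ω, z j ω = 0 ∨ z j ω = 1)
    (hindep : iIndepFun z μ) (S : Finset ι) :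
    μ.real (onesSet z ⁻¹' {S}) = cubeWeight (fun j ↦ μ.real (z j ⁻¹' {1})) univ S := by
  have hzero : ∀ j, μ.real (z j ⁻¹' {0}) = 1 - μ.real (z j ⁻¹' {1}) := fun j ↦ by
    have : z j ⁻¹' {0} = (z j ⁻¹' {1})ᶜ := by
      ext ω; rcases hval j ω with h | h <;> simp [h]
    rw [this, probReal_compl_eq_one_sub (hmeas j (measurableSet_singleton 1))]
  have h := hindep.measure_inter_preimage_eq_mul univ
    (sets := fun j ↦ {if j ∈ S then 1 else 0}) fun _ _ ↦ measurableSet_singleton _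
  simp only [mem_univ, Set.iInter_true] at h
  rw [onesSet_preimage_singleton hval, measureReal_def, h, ENNReal.toReal_prod, cubeWeight]
  refine prod_congr rfl fun j _ ↦ ?_
  split_ifs
  · rfl
  · exact hzero j

lemma integrable_comp_onesSet (μ : Measure Ω) [IsFiniteMeasure μ]
    (hmeas : ∀ j, Measurable (z j)) (hval : ∀ j ω, z j ω = 0 ∨ z j ω = 1) (F : Finset ι → ℝ) :
    Integrable (fun ω ↦ F (onesSet z ω)) μ := by
  rw [comp_onesSet_eq_sum]
  exact integrable_finsetSum _ fun S _ ↦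
    (integrable_const _).indicator (measurableSet_onesSet_preimage hmeas hval S)

lemma integral_comp_onesSet (μ : Measure Ω) [IsProbabilityMeasure μ]
    (hmeas : ∀ j, Measurable (z j)) (hval : ∀ j ω, z j ω = 0 ∨ z j ω = 1)
    (hindep : iIndepFun z μ) (F : Finset ι → ℝ) :
    ∫ ω, F (onesSet z ω) ∂μ = cubeMean (fun j ↦ μ.real (z j ⁻¹' {1})) F := by
  rw [comp_onesSet_eq_sum, integral_finsetSum _ fun S _ ↦
    (integrable_const _).indicator (measurableSet_onesSet_preimage hmeas hval S)]
  refine sum_congr rfl fun S _ ↦ ?_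
  rw [integral_indicator_const _ (measurableSet_onesSet_preimage hmeas hval S), smul_eq_mul,
    measureReal_onesSet_preimage μ hmeas hval hindep]

end OnesSet

lemma janson_exponent_le {μ Δ ε t : ℝ} (hμ : 0 ≤ μ) (hΔ : 0 ≤ Δ) (ht : t = ε * μ / (μ + Δ)) :
    t * ((1 - ε) * μ) + (-(μ * t) + Δ * t ^ 2 / 2) ≤ -(ε * μ) ^ 2 / (2 * (μ + Δ)) := by
  obtain h0 | hpos := (add_nonneg hμ hΔ).eq_or_lt
  · obtain rfl : μ = 0 := by linarith
    obtain rfl : Δ = 0 := by linarith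
    simp
  · subst ht
    rw [le_div_iff₀ (by positivity)]
    field_simp
    nlinarith [sq_nonneg ε, mul_nonneg hμ (sq_nonneg (ε * μ))]

theorem janson_inequality_general
    {Ω : Type*} [MeasureSpace Ω] [IsProbabilityMeasure (ℙ : Measure Ω)]
    {m : ℕ} (z : Fin m → Ω → ℝ)
    (hmeas : ∀ j, Measurable (z j))
    (hval : ∀ j, ∀ ω, z j ω = 0 ∨ z j ω = 1)
    (hindep : iIndepFun z ℙ)
    (𝒮 : Finset (Finset (Fin m)))
    (I : Finset (Fin m) → Ω → ℝ) (hI : ∀ α, I α = fun ω => ∏ j ∈ α, z j ω)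
    (Y : Ω → ℝ) (hY : Y = fun ω => ∑ α ∈ 𝒮, I α ω)
    (Δ : ℝ)
    (hΔ : Δ = ∑ α ∈ 𝒮, ∑ β ∈ 𝒮, if (α ∩ β).Nonempty then (∫ ω, I α ω * I β ω) else 0)
    (ε : ℝ) (hε : 0 < ε) :
    (ℙ {ω | Y ω ≤ (1 - ε) * ∫ ω', Y ω'}).toReal ≤
      Real.exp (-(ε * ∫ ω', Y ω') ^ 2 / (2 * ((∫ ω', Y ω') + Δ))) := by
  set p : Fin m → ℝ := fun j ↦ (ℙ : Measure Ω).real (z j ⁻¹' {1})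
  have hp : ∀ j, p j ∈ Set.Icc 0 1 := fun j ↦ ⟨measureReal_nonneg, measureReal_le_one⟩
  have hmean := integral_comp_onesSet ℙ hmeas hval hindep
  have hIz : ∀ α, I α = fun ω ↦ subsetIndicator α (onesSet z ω) := fun α ↦ by
    rw [hI]; exact funext (prod_eq_subsetIndicator_onesSet hval α)
  have hYz : Y = fun ω ↦ containedCount 𝒮 (onesSet z ω) := by
    simp only [hY, hIz, containedCount]
  have hμ : ∫ ω, Y ω = cubeMean p (containedCount 𝒮) := by rw [hYz, hmean]
  set μ := ∫ ω, Y ω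
  have hΔp : Δ = jansonDelta p 𝒮 := by
    refine hΔ.trans (sum_congr rfl fun α _ ↦ sum_congr rfl fun β _ ↦ ?_)
    simp only [hIz]
    split_ifs
    exacts [hmean fun S ↦ subsetIndicator α S * subsetIndicator β S, rfl]
  have hμ0 : 0 ≤ μ := hμ ▸ cubeMean_nonneg hp fun S ↦ containedCount_nonneg 𝒮 S
  have hΔ0 : 0 ≤ Δ := hΔp ▸ jansonDelta_nonneg hp 𝒮
  set t := ε * μ / (μ + Δ)
  have ht : 0 ≤ t := div_nonneg (mul_nonneg hε.le hμ0) (add_nonneg hμ0 hΔ0)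
  have hmgf : mgf Y ℙ (-t) ≤ exp (-(μ * t) + Δ * t ^ 2 / 2) := by
    rw [hμ, hΔp, hYz]
    exact (hmean fun S ↦ exp (-t * containedCount 𝒮 S)).trans_le
      (cubeMean_exp_neg_mul_containedCount_le hp 𝒮 ht)
  have hint : Integrable (fun ω ↦ exp (-t * Y ω)) ℙ := by
    rw [hYz]; exact integrable_comp_onesSet ℙ hmeas hval fun S ↦ exp (-t * containedCount 𝒮 S)
  calc _ ≤ exp (-(-t) * ((1 - ε) * μ)) * mgf Y ℙ (-t) :=
        measure_le_le_exp_mul_mgf _ (neg_nonpos.2 ht) hint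
    _ ≤ exp (t * ((1 - ε) * μ)) * exp (-(μ * t) + Δ * t ^ 2 / 2) := by
        rw [neg_neg]; gcongr
    _ ≤ _ := by
        rw [← exp_add, exp_le_exp]
        exact janson_exponent_le hμ0 hΔ0 rfl

/-- Janson's inequality: if `z 1, …, z m` are independent `{0,1}`-valued random variables,
`𝒮` is a finite family of nonempty index sets, `I α = ∏_{j ∈ α} z j`, `Y = ∑_{α ∈ 𝒮} I α`
and `Δ = ∑_{α ∩ β ≠ ∅} E[I α · I β]` (including the diagonal), then for any `ε > 0`,
`P(Y ≤ (1-ε)·E Y) ≤ exp(-(ε·E Y)² / (2·(E Y + Δ)))`. -/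
theorem janson_inequality
    {Ω : Type*} [MeasureSpace Ω] [IsProbabilityMeasure (ℙ : Measure Ω)]
    {m : ℕ} (z : Fin m → Ω → ℝ)
    (hmeas : ∀ j, Measurable (z j))
    (hval : ∀ j, ∀ ω, z j ω = 0 ∨ z j ω = 1)
    (hindep : iIndepFun z ℙ)
    (𝒮 : Finset (Finset (Fin m))) (h𝒮 : ∀ α ∈ 𝒮, α.Nonempty)
    (I : Finset (Fin m) → Ω → ℝ) (hI : ∀ α, I α = fun ω => ∏ j ∈ α, z j ω)
    (Y : Ω → ℝ) (hY : Y = fun ω => ∑ α ∈ 𝒮, I α ω)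
    (Δ : ℝ)
    (hΔ : Δ = ∑ α ∈ 𝒮, ∑ β ∈ 𝒮, if (α ∩ β).Nonempty then (∫ ω, I α ω * I β ω) else 0)
    (ε : ℝ) (hε : 0 < ε) :
    (ℙ {ω | Y ω ≤ (1 - ε) * ∫ ω', Y ω'}).toReal ≤
      Real.exp (-(ε * ∫ ω', Y ω') ^ 2 / (2 * ((∫ ω', Y ω') + Δ))) :=
  janson_inequality_general z hmeas hval hindep 𝒮 I hI Y hY Δ hΔ ε hε
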